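/- For any real s > 0 and any integer n ≥ 1 with s² ≤ n/2, the tail of the discrete Gaussian weights satisfies (Σ_{|ℓ| > n} exp(−πℓ²/s²)) / (Σ_{ℓ ∈ ℤ} exp(−πℓ²/s²)) ≤ Σ_{|ℓ| > n} exp(−2ℓ²/n) ≤ exp(−n/10). -/

import Mathlib

/-!
The denominator is at least its `ℓ = 0` term `1`, and `s² ≤ n/2` gives `π/s² ≥ 2/n`, so the
ratio is at most its numerator, which is termwise at most the tail of `exp (-2ℓ²/n)`.
For `k > n ≥ 1` one has `2k²/n ≥ n/10 + k + 2`, so by symmetry that tail is at most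
`2 ∑ₖ e^{-n/10} 2^{-(k+2)} = e^{-n/10}`.
-/

open Real

lemma summable_exp_neg_mul_int_sq_div {a c : ℝ} (ha : 0 < a) (hc : 0 < c) :
    Summable fun ℓ : ℤ => exp (-a * (ℓ : ℝ) ^ 2 / c) := by
  convert summable_pow_mul_jacobiTheta₂_term_bound 0 (by positivity : 0 < a / (π * c)) 0
    using 2 with ℓ
  field_simp
  ring_nf

lemma one_le_tsum_exp_neg_mul_int_sq_div {a c : ℝ} (ha : 0 < a) (hc : 0 < c) :
    1 ≤ ∑' ℓ : ℤ, exp (-a * (ℓ : ℝ) ^ 2 / c) := by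
  simpa using (summable_exp_neg_mul_int_sq_div ha hc).le_tsum 0 fun ℓ _ => (exp_pos _).le

lemma exp_neg_pi_mul_sq_div_le_exp_neg_two_mul_sq_div {s n : ℝ} (hs : 0 < s)
    (hsn : s ^ 2 ≤ n / 2) (x : ℝ) :
    exp (-π * x ^ 2 / s ^ 2) ≤ exp (-2 * x ^ 2 / n) := by
  have hn : 0 < n := by nlinarith
  rw [exp_le_exp, div_le_div_iff₀ (by positivity) hn]
  nlinarith [pi_gt_three, mul_le_mul_of_nonneg_left hsn (sq_nonneg x),
    mul_nonneg (sq_nonneg x) hn.le]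

lemma tsum_int_eq_two_mul_tsum_nat {f : ℤ → ℝ} (hf : f.Even) (hf0 : f 0 = 0)
    (hsum : Summable fun k : ℕ => f k) : ∑' ℓ, f ℓ = 2 * ∑' k : ℕ, f k := by
  have hsum_int : Summable f := hsum.of_nat_of_neg (hsum.congr fun k => (hf k).symm)
  rw [← add_zero (∑' ℓ, f ℓ), ← hf0, ← tsum_nat_add_neg hsum_int, ← tsum_mul_left]
  exact tsum_congr fun k => by rw [hf, two_mul]

lemma exp_neg_two_mul_sq_div_le_geometric {n k : ℕ} (hn : 1 ≤ n) (hk : n < k) :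
    exp (-2 * (k : ℝ) ^ 2 / n) ≤ exp (-(n : ℝ) / 10) / 4 * (1 / 2) ^ k := by
  have hn' : (1 : ℝ) ≤ n := by exact_mod_cast hn
  have hk' : (n : ℝ) + 1 ≤ k := by exact_mod_cast hk
  calc exp (-2 * (k : ℝ) ^ 2 / n) ≤ exp (-(n : ℝ) / 10 + -1 * ↑(k + 2)) := by
        rw [exp_le_exp, div_le_iff₀ (by positivity)]
        push_cast
        nlinarith
    _ = exp (-(n : ℝ) / 10) * exp (-1) ^ (k + 2) := by
        rw [exp_add, mul_comm (-1 : ℝ), exp_nat_mul]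
    _ ≤ exp (-(n : ℝ) / 10) * (1 / 2) ^ (k + 2) := by
        gcongr
        exact exp_neg_one_lt_half.le
    _ = exp (-(n : ℝ) / 10) / 4 * (1 / 2) ^ k := by ring

lemma tsum_ite_lt_abs_exp_neg_two_mul_sq_div_le {n : ℕ} (hn : 1 ≤ n) :
    (∑' ℓ : ℤ, if (n : ℤ) < |ℓ| then exp (-2 * (ℓ : ℝ) ^ 2 / n) else 0) ≤
      exp (-(n : ℝ) / 10) := by
  set F : ℤ → ℝ := fun ℓ => if (n : ℤ) < |ℓ| then exp (-2 * (ℓ : ℝ) ^ 2 / n) else 0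
  have hF_even : F.Even := fun ℓ => by simp only [F, abs_neg, Int.cast_neg, neg_sq]
  have hF_zero : F 0 = 0 := by simp [F]
  have hF_le : ∀ k : ℕ, F k ≤ exp (-(n : ℝ) / 10) / 4 * (1 / 2) ^ k := fun k => by
    simp only [F, Nat.abs_cast, Nat.cast_lt, Int.cast_natCast]
    split_ifs with hk
    · exact exp_neg_two_mul_sq_div_le_geometric hn hk
    · positivity
  have hgeom := hasSum_geometric_two.mul_left (exp (-(n : ℝ) / 10) / 4)
  have hsum : Summable fun k : ℕ => F k :=
    .of_nonneg_of_le (fun k => by positivity) hF_le hgeom.summable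
  calc ∑' ℓ, F ℓ = 2 * ∑' k : ℕ, F k := tsum_int_eq_two_mul_tsum_nat hF_even hF_zero hsum
    _ ≤ 2 * (exp (-(n : ℝ) / 10) / 4 * 2) := by gcongr; exact hasSum_le hF_le hsum.hasSum hgeom
    _ = exp (-(n : ℝ) / 10) := by ring

/-- Discrete Gaussian tail bound: for `s > 0`, `n ≥ 1` with `s² ≤ n/2`,
`(Σ_{|ℓ|>n} e^{−πℓ²/s²}) / (Σ_ℓ e^{−πℓ²/s²}) ≤ Σ_{|ℓ|>n} e^{−2ℓ²/n} ≤ e^{−n/10}`. -/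
theorem stmt_5 (s : ℝ) (n : ℕ) (hs : 0 < s) (hn : 1 ≤ n)
    (hsn : s ^ 2 ≤ (n : ℝ) / 2) :
    (∑' ℓ : ℤ, if (n : ℤ) < |ℓ| then Real.exp (-Real.pi * (ℓ : ℝ) ^ 2 / s ^ 2) else 0)
        / (∑' ℓ : ℤ, Real.exp (-Real.pi * (ℓ : ℝ) ^ 2 / s ^ 2))
      ≤ ∑' ℓ : ℤ, (if (n : ℤ) < |ℓ| then Real.exp (-2 * (ℓ : ℝ) ^ 2 / n) else 0) ∧
    (∑' ℓ : ℤ, if (n : ℤ) < |ℓ| then Real.exp (-2 * (ℓ : ℝ) ^ 2 / n) else 0)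
      ≤ Real.exp (-(n : ℝ) / 10) := by
  have htail_summable :
      Summable fun ℓ : ℤ => if (n : ℤ) < |ℓ| then exp (-2 * (ℓ : ℝ) ^ 2 / n) else 0 :=
    .of_nonneg_of_le (fun ℓ => by positivity) (fun ℓ => by split_ifs <;> [rfl; positivity])
      (summable_exp_neg_mul_int_sq_div two_pos (by positivity))
  have hterm_le : ∀ ℓ : ℤ,
      (if (n : ℤ) < |ℓ| then exp (-π * (ℓ : ℝ) ^ 2 / s ^ 2) else 0) ≤
        if (n : ℤ) < |ℓ| then exp (-2 * (ℓ : ℝ) ^ 2 / n) else 0 := fun ℓ => by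
    split_ifs
    exacts [exp_neg_pi_mul_sq_div_le_exp_neg_two_mul_sq_div hs hsn _, le_rfl]
  refine ⟨?_, tsum_ite_lt_abs_exp_neg_two_mul_sq_div_le hn⟩
  calc _ ≤ ∑' ℓ : ℤ, if (n : ℤ) < |ℓ| then exp (-π * (ℓ : ℝ) ^ 2 / s ^ 2) else 0 :=
        div_le_self (tsum_nonneg fun ℓ => by positivity)
          (one_le_tsum_exp_neg_mul_int_sq_div pi_pos (by positivity))
    _ ≤ _ := (htail_summable.of_nonneg_of_le (fun ℓ => by positivity) hterm_le).tsum_le_tsum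
        hterm_le htail_summable
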